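/- arXiv:1412.3498 — 8 statements merged into one kernel-verified Lean document; each statement's English description precedes it below -/
import Mathlib

section
/- Suppose n ∈ 3ℕ, k ∈ ℕ with 1 ≤ k < n/3. Then there exists a graph G on n vertices whose degree sequence d₁ ≤ … ≤ dₙ satisfies dᵢ = n/3 + k − 1 for 1 ≤ i ≤ k, dᵢ = 2n/3 for k+1 ≤ i ≤ n/3+k, dᵢ = n − k − 1 for n/3+k+1 ≤ i ≤ n−k+1, and dᵢ = n − 1 for n−k+2 ≤ i ≤ n, but such that G contains no perfect K₃-packing. -/
/-!
Split the `3m` vertices into consecutive blocks `A, B, C, D` of sizes `k, m, 2m - 2k + 1, k - 1`;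
join `D` to everything, make `C` a clique, and add all edges between `A` and `B` and between `B`
and `C`. Then `A ∪ B` spans a bipartite graph and the common neighbours of an `A–B` edge all lie
in `D`, so every triangle `t` has `|t ∩ (A ∪ B)| ≤ 1 + |t ∩ D|`. Summing over the `m` triangles of
a perfect packing gives `m + k = |A ∪ B| ≤ m + (k - 1)`.
-/

open Finset

theorem card_le_card_add_card_of_pairwiseDisjoint {α : Type*} [DecidableEq α]
    {T : Finset (Finset α)} {S D : Finset α}
    (hdisj : (T : Set (Finset α)).PairwiseDisjoint id) (hcover : ∀ v ∈ S, ∃ t ∈ T, v ∈ t)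
    (hmeet : ∀ t ∈ T, #(t ∩ S) ≤ 1 + #(t ∩ D)) :
    #S ≤ #T + #D := by
  have hS : S ⊆ T.biUnion (· ∩ S) := fun v hv ↦ by
    obtain ⟨t, ht, hvt⟩ := hcover v hv
    exact mem_biUnion.2 ⟨t, ht, mem_inter.2 ⟨hvt, hv⟩⟩
  have hD : ∑ t ∈ T, #(t ∩ D) = #(T.biUnion (· ∩ D)) :=
    (card_biUnion fun t ht t' ht' hne ↦
      (hdisj ht ht' hne).mono inter_subset_left inter_subset_left).symm
  calc #S ≤ ∑ t ∈ T, #(t ∩ S) := (card_le_card hS).trans card_biUnion_le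
    _ ≤ ∑ t ∈ T, (1 + #(t ∩ D)) := sum_le_sum hmeet
    _ = #T + #(T.biUnion (· ∩ D)) := by rw [sum_add_distrib, hD, sum_const, smul_eq_mul, mul_one]
    _ ≤ #T + #D := by
      gcongr
      exact biUnion_subset.2 fun _ _ ↦ inter_subset_right

theorem Fin.card_filter_val_eq_sub {n a b : ℕ} (hb : b ≤ n) (P : ℕ → Prop) [DecidablePred P]
    (hP : ∀ i < n, P i ↔ a ≤ i ∧ i < b) : #{u : Fin n | P u} = b - a := by
  rw [← Nat.card_Ico, ← card_map Fin.valEmbedding]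
  congr 1
  ext i
  simp only [mem_map, mem_filter, mem_univ, true_and, Fin.valEmbedding_apply, mem_Ico]
  constructor
  · rintro ⟨u, hu, rfl⟩
    exact (hP u u.isLt).1 hu
  · intro hi
    exact ⟨⟨i, by omega⟩, (hP i (by omega)).2 hi, rfl⟩

namespace K3Packing

variable (k m : ℕ)

/-- The blocks `A, B, C, D` of the construction are `0, 1, 2, 3`. -/
def part (i : ℕ) : Fin 4 :=
  if i < k then 0 else if i < m + k then 1 else if i < 3 * m - k + 1 then 2 else 3

def PartAdj (p q : Fin 4) : Prop :=
  p = 3 ∨ q = 3 ∨ (p = 0 ∧ q = 1) ∨ (p = 1 ∧ q = 0) ∨ (p = 1 ∧ q = 2) ∨ (p = 2 ∧ q = 1) ∨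
    (p = 2 ∧ q = 2)

instance : DecidableRel PartAdj := fun p q ↦ by unfold PartAdj; infer_instance

theorem partAdj_symm {p q : Fin 4} (h : PartAdj p q) : PartAdj q p := by
  revert p q; decide

def graph : SimpleGraph (Fin (3 * m)) where
  Adj u v := u ≠ v ∧ PartAdj (part k m u) (part k m v)
  symm := ⟨fun _ _ h ↦ ⟨h.1.symm, partAdj_symm h.2⟩⟩
  loopless := ⟨fun _ h ↦ h.1 rfl⟩

instance : DecidableRel (graph k m).Adj := fun u v ↦
  inferInstanceAs (Decidable (u ≠ v ∧ PartAdj (part k m u) (part k m v)))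

def partSize : Fin 4 → ℕ := ![k, m, 2 * m - 2 * k + 1, k - 1]

def partDegree : Fin 4 → ℕ := ![m + k - 1, 2 * m, 3 * m - k - 1, 3 * m - 1]

variable {k m}

theorem card_filter_part_eq (hk : 1 ≤ k) (hkm : k < m) (q : Fin 4) :
    #{u : Fin (3 * m) | part k m u = q} = partSize k m q := by
  obtain ⟨a, b, hb, hsize, hpart⟩ : ∃ a b, b ≤ 3 * m ∧ b - a = partSize k m q ∧
      ∀ i < 3 * m, part k m i = q ↔ a ≤ i ∧ i < b := by
    fin_cases q <;> [refine ⟨0, k, by omega, rfl, ?_⟩;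
      refine ⟨k, m + k, by omega, by simp [partSize], ?_⟩;
      refine ⟨m + k, 3 * m - k + 1, by omega, by simp [partSize]; omega, ?_⟩;
      refine ⟨3 * m - k + 1, 3 * m, le_rfl, by simp [partSize]; omega, ?_⟩]
    all_goals
      intro i _
      simp only [part]
      split_ifs <;> simp <;> omega
  rw [Fin.card_filter_val_eq_sub hb _ hpart, hsize]

theorem card_filter_partAdj (hk : 1 ≤ k) (hkm : k < m) (p : Fin 4) :
    #{u : Fin (3 * m) | PartAdj p (part k m u)} =
      ∑ q, if PartAdj p q then partSize k m q else 0 := by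
  rw [card_filter, ← sum_fiberwise' univ (fun u : Fin (3 * m) ↦ part k m u)
    (fun q ↦ if PartAdj p q then 1 else 0)]
  refine sum_congr rfl fun q _ ↦ ?_
  rw [sum_const, card_filter_part_eq hk hkm, smul_eq_mul]
  split_ifs <;> simp

theorem card_neighborSet_graph (hk : 1 ≤ k) (hkm : k < m) (v : Fin (3 * m)) :
    ((graph k m).neighborSet v).ncard = partDegree k m (part k m v) := by
  have hN : (graph k m).neighborFinset v =
      ({u | PartAdj (part k m v) (part k m u)} : Finset (Fin (3 * m))).erase v := by
    ext u
    rw [SimpleGraph.mem_neighborFinset]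
    simp [graph, ne_comm]
  rw [Set.ncard_eq_toFinset_card', ← SimpleGraph.neighborFinset_def, hN, card_erase_eq_ite,
    card_filter_partAdj hk hkm]
  simp only [mem_filter, mem_univ, true_and, Fin.sum_univ_four]
  generalize part k m v = p
  fin_cases p <;> simp [PartAdj, partSize, partDegree] <;> omega

theorem card_filter_part_le_one (hkm : k < m) : #{u : Fin (3 * m) | part k m u ≤ 1} = m + k := by
  rw [Fin.card_filter_val_eq_sub (P := fun i ↦ part k m i ≤ 1) (a := 0) (b := m + k) (by omega)]
  · omega
  · intro i _
    simp only [part]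
    split_ifs <;> omega

theorem part_mono : Monotone (part k m) := by
  intro i j hij
  simp only [part]
  split_ifs <;> omega

theorem partDegree_mono (hkm : k < m) : Monotone (partDegree k m) := by
  intro p q hpq
  fin_cases p <;> fin_cases q <;> simp [partDegree] at hpq ⊢ <;> omega

theorem partAdj_triangle : ∀ p q r : Fin 4, PartAdj p q → PartAdj p r → PartAdj q r →
    (if p ≤ 1 then 1 else 0) + (if q ≤ 1 then 1 else 0) + (if r ≤ 1 then 1 else 0) ≤
      1 + ((if p = 3 then 1 else 0) + (if q = 3 then 1 else 0) + (if r = 3 then 1 else 0)) := by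
  decide

theorem card_triangle_inter_le {a b c : Fin (3 * m)} (hab : (graph k m).Adj a b)
    (hac : (graph k m).Adj a c) (hbc : (graph k m).Adj b c) :
    #({a, b, c} ∩ ({u | part k m u ≤ 1} : Finset (Fin (3 * m)))) ≤
      1 + #({a, b, c} ∩ ({u | part k m u = 3} : Finset (Fin (3 * m)))) := by
  simp only [inter_filter, inter_univ, card_filter]
  rw [sum_insert (by simp [hab.ne, hac.ne]), sum_pair hbc.ne, sum_insert (by simp [hab.ne, hac.ne]),
    sum_pair hbc.ne]
  have := partAdj_triangle _ _ _ hab.2 hac.2 hbc.2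
  omega

end K3Packing

open K3Packing in
/-- For `n ∈ 3ℕ` and `1 ≤ k < n/3` there is a graph on `n` vertices
with the prescribed degree sequence but no perfect `K₃`-packing. -/
theorem stmt3 (n k : ℕ) (hn3 : 3 ∣ n) (hk1 : 1 ≤ k) (hk : 3 * k < n) :
    ∃ G : SimpleGraph (Fin n), ∃ σ : Equiv.Perm (Fin n),
      (∀ i j : Fin n, i ≤ j →
        (G.neighborSet (σ i)).ncard ≤ (G.neighborSet (σ j)).ncard) ∧
      (∀ i : Fin n, (G.neighborSet (σ i)).ncard =
        if (i : ℕ) < k then n / 3 + k - 1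
        else if (i : ℕ) < n / 3 + k then 2 * n / 3
        else if (i : ℕ) < n - k + 1 then n - k - 1
        else n - 1) ∧
      ¬ ∃ T : Finset (Finset (Fin n)),
          (∀ t ∈ T, ∃ a b c : Fin n,
            G.Adj a b ∧ G.Adj a c ∧ G.Adj b c ∧ t = {a, b, c}) ∧
          (T : Set (Finset (Fin n))).PairwiseDisjoint id ∧
          T.card = n / 3 ∧
          (∀ v : Fin n, ∃ t ∈ T, v ∈ t) := by
  obtain ⟨m, rfl⟩ := hn3
  have hkm : k < m := by omega
  refine ⟨graph k m, Equiv.refl _, fun i j hij ↦ ?_, fun i ↦ ?_, ?_⟩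
  · simp only [Equiv.refl_apply, card_neighborSet_graph hk1 hkm]
    exact partDegree_mono hkm (part_mono hij)
  · rw [Equiv.refl_apply, card_neighborSet_graph hk1 hkm]
    simp only [part]
    split_ifs <;> simp [partDegree] <;> omega
  · rintro ⟨T, hT, hdisj, hcard, hcover⟩
    have hcount := card_le_card_add_card_of_pairwiseDisjoint hdisj (fun v _ ↦ hcover v)
      fun t ht ↦ by
        obtain ⟨a, b, c, hab, hac, hbc, rfl⟩ := hT t ht
        exact card_triangle_inter_le hab hac hbc
    rw [card_filter_part_le_one hkm, hcard, card_filter_part_eq hk1 hkm 3] at hcount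
    simp only [partSize, Matrix.cons_val] at hcount
    omega
end

section
/- Let G be an η-good graph on n vertices (with 1/n ≤ 1/k, η ≤ 1) and let X ⊆ V(G) with |X| ≥ n/3 + k. Then the number of edges of G with both endpoints in X exceeds k²/2. -/
/-!
Call a vertex of `X` high if its degree is at least `(1/3 + η) n + j + 1`, where `j = ⌊n/3⌋`.
Goodness, applied to a `j`-set of non-high vertices, shows that fewer than `j` vertices of `X`
are not high, so at least `|X| + 1 - j ≥ k + 1` are. A high vertex loses at most `n - |X|`
neighbours outside `X`, so it has at least `k + 1` neighbours inside `X`. Summing degrees in the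
graph induced on `X` gives at least `(k + 1)² / 2 > k² / 2` edges.
-/

open Finset

theorem Finset.card_lt_of_forall_card_eq_exists {α : Type*} {s : Finset α} {j : ℕ} {p : α → Prop}
    (h : ∀ t ⊆ s, #t = j → ∃ x ∈ t, p x) (hs : ∀ x ∈ s, ¬ p x) : #s < j := by
  by_contra! hj
  obtain ⟨t, hts, rfl⟩ := exists_subset_card_eq hj
  obtain ⟨x, hxt, hx⟩ := h t hts rfl
  exact hs x (hts hxt) hx

namespace SimpleGraph

variable {V : Type*} [Fintype V] (G : SimpleGraph V) [DecidableRel G.Adj]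

theorem ncard_neighborSet_eq_degree (v : V) : (G.neighborSet v).ncard = G.degree v := by
  rw [Set.ncard_eq_toFinset_card']; rfl

variable [DecidableEq V] (s : Set V) [DecidablePred (· ∈ s)]

theorem degree_le_degree_induce_add_card_compl (v : s) :
    G.degree v ≤ (G.induce s).degree v + #s.toFinsetᶜ := by
  rw [← card_neighborFinset_eq_degree, ← card_neighborFinset_eq_degree, ← card_map (.subtype _),
    map_neighborFinset_induce, ← inf_eq_inter, ← sdiff_compl]
  exact card_le_card_sdiff_add_card

theorem ncard_edges_subset_eq_card_edgeFinset_induce :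
    {e | e ∈ G.edgeSet ∧ ∀ v ∈ e, v ∈ s}.ncard = #(G.induce s).edgeFinset := by
  rw [← card_map (Function.Embedding.subtype _).sym2Map, map_edgeFinset_induce,
    ← Set.ncard_coe_finset]
  congr 1
  ext e
  simp [Set.mem_sym2_iff_subset, Set.subset_def]

theorem card_mul_le_two_mul_card_edgeFinset_induce {A : Finset V} (hAs : A ⊆ s.toFinset) {d : ℕ}
    (hA : ∀ v ∈ A, d + #s.toFinsetᶜ ≤ G.degree v) :
    #A * d ≤ 2 * #(G.induce s).edgeFinset := by
  rw [← sum_degrees_eq_twice_card_edges]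
  have hd : ∀ v ∈ A.subtype (· ∈ s), d ≤ (G.induce s).degree v := fun v hv =>
    Nat.le_of_add_le_add_right
      ((hA v (mem_subtype.1 hv)).trans (G.degree_le_degree_induce_add_card_compl s v))
  calc #A * d = #(A.subtype (· ∈ s)) * d := by
        rw [card_subtype, filter_true_of_mem fun v hv => Set.mem_toFinset.1 (hAs hv)]
    _ ≤ ∑ v ∈ A.subtype (· ∈ s), (G.induce s).degree v := card_nsmul_le_sum _ _ _ hd
    _ ≤ ∑ v, (G.induce s).degree v := sum_le_univ_sum_of_nonneg fun _ => Nat.zero_le _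

theorem mul_le_two_mul_ncard_edges_subset_of_forall_card_eq_exists (X : Finset V) {j d : ℕ}
    (h : ∀ S ⊆ X, #S = j → ∃ x ∈ S, d + #Xᶜ ≤ G.degree x) :
    (#X + 1 - j) * d ≤ 2 * {e | e ∈ G.edgeSet ∧ ∀ v ∈ e, v ∈ X}.ncard := by
  set high : V → Prop := fun v => d + #Xᶜ ≤ G.degree v
  have hlow : #(X.filter (¬ high ·)) < j :=
    card_lt_of_forall_card_eq_exists (fun S hS => h S (hS.trans (filter_subset _ _)))
      fun _ hv => (mem_filter.1 hv).2
  have hcard : #X + 1 - j ≤ #(X.filter high) := by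
    have := card_filter_add_card_filter_not (s := X) high
    omega
  have hedges := G.card_mul_le_two_mul_card_edgeFinset_induce X (A := X.filter high) (by simp)
    fun v hv => by simpa using (mem_filter.1 hv).2
  rw [← G.ncard_edges_subset_eq_card_edgeFinset_induce] at hedges
  exact (Nat.mul_le_mul_right d hcard).trans hedges

end SimpleGraph

theorem stmt6_general (η : ℝ) (hη0 : 0 < η) :
    ∃ n₀ : ℕ, ∀ n : ℕ, n₀ ≤ n → ∀ k : ℕ, 1 ≤ k → k ≤ n →
    ∀ G : SimpleGraph (Fin n),
      (∀ X : Finset (Fin n), 1 ≤ X.card → 3 * X.card ≤ n →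
        ∃ x ∈ X, ((G.neighborSet x).ncard : ℝ) ≥ (1/3 + η) * n + X.card + 1) →
      ∀ X : Finset (Fin n), (n : ℝ) / 3 + k ≤ X.card →
        (k : ℝ) ^ 2 / 2 <
          (({e : Sym2 (Fin n) | e ∈ G.edgeSet ∧ ∀ v ∈ e, v ∈ X}).ncard : ℝ) := by
  classical
  refine ⟨3, fun n hn k _ _ G hG X hX => ?_⟩
  set j := n / 3
  have hj : (n : ℝ) / 3 < j + 1 := by
    rw [div_lt_iff₀ three_pos]; exact_mod_cast (by omega : n < (j + 1) * 3)
  have hXj : j + k ≤ #X := by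
    have : (j : ℝ) ≤ n / 3 := by rw [le_div_iff₀ three_pos]; exact_mod_cast (by omega : j * 3 ≤ n)
    exact_mod_cast (by linarith : (j + k : ℝ) ≤ #X)
  have hXc : (#Xᶜ : ℝ) = n - #X := by
    rw [card_compl, Fintype.card_fin, Nat.cast_sub (by simpa using card_le_univ X)]
  -- `deg x - (n - |X|) ≥ η n + (j + 1 - n/3) + k > k`
  have hhigh : ∀ S ⊆ X, #S = j → ∃ x ∈ S, (k + 1) + #Xᶜ ≤ G.degree x := by
    intro S _ hS
    obtain ⟨x, hxS, hx⟩ := hG S (by omega) (by omega)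
    rw [hS, G.ncard_neighborSet_eq_degree] at hx
    have : ((k + #Xᶜ : ℕ) : ℝ) < G.degree x := by
      have : 0 < η * n := mul_pos hη0 (by positivity)
      push_cast [hXc]; linarith
    exact ⟨x, hxS, by have := Nat.cast_lt.1 this; omega⟩
  have hedges := G.mul_le_two_mul_ncard_edges_subset_of_forall_card_eq_exists X hhigh
  have hsq := (Nat.mul_le_mul_right (k + 1) (by omega : k + 1 ≤ #X + 1 - j)).trans hedges
  have := (Nat.cast_le (α := ℝ)).2 hsq
  push_cast at this
  linarith

/-- In an `η`-good graph `G` on `n` vertices, if `|X| ≥ n/3 + k`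
then the number of edges of `G` inside `X` exceeds `k²/2`. -/
theorem stmt6 (η : ℝ) (hη0 : 0 < η) (hη1 : η ≤ 1) :
    ∃ n₀ : ℕ, ∀ n : ℕ, n₀ ≤ n → ∀ k : ℕ, 1 ≤ k → k ≤ n →
    ∀ G : SimpleGraph (Fin n),
      (∀ X : Finset (Fin n), 1 ≤ X.card → 3 * X.card ≤ n →
        ∃ x ∈ X, ((G.neighborSet x).ncard : ℝ) ≥ (1/3 + η) * n + X.card + 1) →
      ∀ X : Finset (Fin n), (n : ℝ) / 3 + k ≤ X.card →
        (k : ℝ) ^ 2 / 2 <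
          (({e : Sym2 (Fin n) | e ∈ G.edgeSet ∧ ∀ v ∈ e, v ∈ X}).ncard : ℝ) :=
  stmt6_general η hη0
end

section
/- Let G be an η-good graph on n vertices (with 1/n ≪ η ≤ 1) and let X, Y ⊆ V(G) be non-empty with no edge of G between X and Y. Then |X| + |Y| < (2/3 − η)n. -/
/-!
A vertex `x ∈ X` has no neighbour in `Y`, so `deg x + |Y| ≤ n`, and symmetrically for `Y`.
Applying goodness to a subset of `X` of size `min |X| ⌊n/3⌋` yields such an `x` with
`deg x ≥ (1/3 + η)n + min |X| ⌊n/3⌋ + 1`, and likewise for `Y`. If `|X| ≤ n/3`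
(or `|Y| ≤ n/3`) one of these inequalities alone gives the bound; otherwise adding both and using
`3⌊n/3⌋ ≥ n - 2` does.
-/

open Finset

theorem cast_add_lt_of_add_min_div_three_le {η : ℝ} (hη : 0 ≤ η) {a b n : ℕ}
    (ha : (1/3 + η) * n + (min a (n / 3) : ℕ) + 1 + b ≤ n)
    (hb : (1/3 + η) * n + (min b (n / 3) : ℕ) + 1 + a ≤ n) :
    (a : ℝ) + b < (2/3 - η) * n := by
  rcases le_total a (n / 3) with haN | haN
  · rw [min_eq_left haN] at ha
    linarith
  rcases le_total b (n / 3) with hbN | hbN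
  · rw [min_eq_left hbN] at hb
    linarith
  rw [min_eq_right haN] at ha
  rw [min_eq_right hbN] at hb
  have hfloor : (n : ℝ) ≤ 3 * (n / 3 : ℕ) + 2 := by
    exact_mod_cast (by omega : n ≤ 3 * (n / 3) + 2)
  have hηn : 0 ≤ η * n := by positivity
  linarith

namespace SimpleGraph

variable {V : Type*} [Fintype V] (G : SimpleGraph V)

theorem ncard_neighborSet_add_card_le_of_forall_not_adj {x : V} {Y : Finset V}
    (h : ∀ y ∈ Y, ¬ G.Adj x y) : (G.neighborSet x).ncard + #Y ≤ Fintype.card V := by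
  have hdisj : Disjoint (G.neighborSet x) Y :=
    Set.disjoint_left.2 fun y hxy hy => h y hy hxy
  rw [← Set.ncard_coe_finset, ← Set.ncard_union_eq hdisj, ← Nat.card_eq_fintype_card]
  exact Set.ncard_le_card _

/-- The paper's condition `dᵢ ≥ (1/3 + η)n + i + 1` for `i ≤ n/3` on the sorted degree
sequence, phrased without sorting: any `i` vertices include one of rank at least `i`. -/
def IsGood (η : ℝ) : Prop :=
  ∀ X : Finset V, 1 ≤ #X → 3 * #X ≤ Fintype.card V →
    ∃ x ∈ X, ((G.neighborSet x).ncard : ℝ) ≥ (1/3 + η) * Fintype.card V + #X + 1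

variable {G}

theorem IsGood.exists_ncard_neighborSet_ge {η : ℝ} (hG : G.IsGood η)
    (hV : 3 ≤ Fintype.card V) {X : Finset V} (hX : X.Nonempty) :
    ∃ x ∈ X, (1/3 + η) * Fintype.card V + (min #X (Fintype.card V / 3) : ℕ) + 1 ≤
      (G.neighborSet x).ncard := by
  obtain ⟨X', hX'X, hX'⟩ := exists_subset_card_eq (min_le_left #X (Fintype.card V / 3))
  have hX'pos : 1 ≤ #X' := by have := hX.card_pos; omega
  obtain ⟨x, hx, hdeg⟩ := hG X' hX'pos (by omega)
  exact ⟨x, hX'X hx, hX' ▸ hdeg⟩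

end SimpleGraph

open SimpleGraph in
theorem stmt7_general (η : ℝ) (hη0 : 0 < η) :
    ∃ n₀ : ℕ, ∀ n : ℕ, n₀ ≤ n →
    ∀ G : SimpleGraph (Fin n),
      (∀ X : Finset (Fin n), 1 ≤ X.card → 3 * X.card ≤ n →
        ∃ x ∈ X, ((G.neighborSet x).ncard : ℝ) ≥ (1/3 + η) * n + X.card + 1) →
      ∀ X Y : Finset (Fin n), X.Nonempty → Y.Nonempty →
        (∀ x ∈ X, ∀ y ∈ Y, ¬ G.Adj x y) →
        (X.card : ℝ) + Y.card < (2/3 - η) * n := by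
  refine ⟨3, fun n hn G hgood X Y hX hY hXY => ?_⟩
  have hcard : Fintype.card (Fin n) = n := Fintype.card_fin n
  have hG : G.IsGood η := by simpa only [IsGood, hcard] using hgood
  have hn' : 3 ≤ Fintype.card (Fin n) := hcard.symm ▸ hn
  obtain ⟨x, hx, hdx⟩ := hG.exists_ncard_neighborSet_ge hn' hX
  obtain ⟨y, hy, hdy⟩ := hG.exists_ncard_neighborSet_ge hn' hY
  have hx' := G.ncard_neighborSet_add_card_le_of_forall_not_adj (hXY x hx)
  have hy' := G.ncard_neighborSet_add_card_le_of_forall_not_adj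
    fun x' hx' hadj => hXY x' hx' y hy hadj.symm
  rw [hcard] at hdx hdy hx' hy'
  refine cast_add_lt_of_add_min_div_three_le hη0.le ?_ ?_
  · have : ((G.neighborSet x).ncard : ℝ) + #Y ≤ n := by exact_mod_cast hx'
    linarith
  · have : ((G.neighborSet y).ncard : ℝ) + #X ≤ n := by exact_mod_cast hy'
    linarith

/-- In an `η`-good graph `G` on `n` vertices, if `X,Y` are nonempty
vertex sets with no edge of `G` between `X` and `Y`, then `|X| + |Y| < (2/3 − η)n`. -/
theorem stmt7 (η : ℝ) (hη0 : 0 < η) (hη1 : η ≤ 1) :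
    ∃ n₀ : ℕ, ∀ n : ℕ, n₀ ≤ n →
    ∀ G : SimpleGraph (Fin n),
      (∀ X : Finset (Fin n), 1 ≤ X.card → 3 * X.card ≤ n →
        ∃ x ∈ X, ((G.neighborSet x).ncard : ℝ) ≥ (1/3 + η) * n + X.card + 1) →
      ∀ X Y : Finset (Fin n), X.Nonempty → Y.Nonempty →
        (∀ x ∈ X, ∀ y ∈ Y, ¬ G.Adj x y) →
        (X.card : ℝ) + Y.card < (2/3 - η) * n :=
  stmt7_general η hη0
end

section
/- Let 0 < 1/n ≪ η < 1, let V be a set of order n, and let d : V → ℝ be (η,n)-good. Let V' ⊆ V with |V'| ≥ (1 − η/4)n and let d' : V' → ℝ satisfy d'(v) ≥ d(v) − ηn/4 for all v ∈ V'. Then d' is (η/2,n)-good. -/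
/-- If `d : V → ℝ` is `(η,n)`-good (`|V| = n`), `V' ⊆ V` has
`|V'| ≥ (1 − η/4)n`, and `d' : V' → ℝ` satisfies `d'(v) ≥ d(v) − ηn/4` on `V'`,
then `d'` is `(η/2,n)`-good.  Goodness of a function on a finite set `S` is
formalised via: every nonempty `X ⊆ S` with `|X| ≤ |S|/3` contains `x` with
`d x ≥ (1/3+η)n + |X| + 1`. -/
theorem stmt8 (η : ℝ) (hη0 : 0 < η) (hη1 : η < 1) :
    ∃ n₀ : ℕ, ∀ n : ℕ, n₀ ≤ n →
    ∀ d : Fin n → ℝ,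
      (∀ X : Finset (Fin n), 1 ≤ X.card → 3 * X.card ≤ n →
        ∃ x ∈ X, d x ≥ (1/3 + η) * n + X.card + 1) →
    ∀ V' : Finset (Fin n), (1 - η/4) * n ≤ V'.card →
    ∀ d' : Fin n → ℝ, (∀ v ∈ V', d' v ≥ d v - η * n / 4) →
    ∀ X ⊆ V', 1 ≤ X.card → 3 * X.card ≤ V'.card →
      ∃ x ∈ X, d' x ≥ (1/3 + η/2) * n + X.card + 1 := by
  refine ⟨0, fun n _ d hd V' hV' d' hd' X hXV' hX1 hX3 => ?_⟩
  have hVn : V'.card ≤ n := by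
    simpa using V'.card_le_univ
  obtain ⟨x, hxX, hx⟩ := hd X hX1 (hX3.trans hVn)
  refine ⟨x, hxX, ?_⟩
  have h1 := hd' x (hXV' hxX)
  have hn0 : (0:ℝ) ≤ n := Nat.cast_nonneg n
  nlinarith
end

section
/- Any graph obtained from an η-good graph G on n vertices by removing at most ηn/4 vertices and at most ηn/4 edges at each remaining vertex is (η/2, n)-good. -/
/-- Any graph obtained from an `η`-good graph `G` on `n` vertices by
removing at most `ηn/4` vertices and at most `ηn/4` edges at each remaining
vertex is `(η/2,n)`-good. -/
theorem stmt9 (η : ℝ) (hη0 : 0 < η) (hη1 : η < 1) :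
    ∃ n₀ : ℕ, ∀ n : ℕ, n₀ ≤ n →
    ∀ G : SimpleGraph (Fin n),
      (∀ X : Finset (Fin n), 1 ≤ X.card → 3 * X.card ≤ n →
        ∃ x ∈ X, ((G.neighborSet x).ncard : ℝ) ≥ (1/3 + η) * n + X.card + 1) →
    ∀ H : SimpleGraph (Fin n), H ≤ G →
    ∀ V' : Finset (Fin n), (n : ℝ) - V'.card ≤ η * n / 4 →
      (∀ v ∈ V', ((G.neighborSet v \ H.neighborSet v).ncard : ℝ) ≤ η * n / 4) →
    ∀ X ⊆ V', 1 ≤ X.card → 3 * X.card ≤ V'.card →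
      ∃ x ∈ X, (((H.neighborSet x) ∩ (V' : Set (Fin n))).ncard : ℝ)
        ≥ (1/3 + η/2) * n + X.card + 1 := by
  refine ⟨0, fun n _ G hG H hHG V' hV' hdeg X hXV' hX1 hX3 => ?_⟩
  have hVn : V'.card ≤ n := by
    simpa using V'.card_le_univ
  obtain ⟨x, hxX, hx⟩ := hG X hX1 (hX3.trans hVn)
  refine ⟨x, hxX, ?_⟩
  have hxV' : x ∈ V' := hXV' hxX
  set A : Set (Fin n) := G.neighborSet x
  set B : Set (Fin n) := H.neighborSet x ∩ (V' : Set (Fin n))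
  have hHsub : H.neighborSet x ⊆ A := fun y hy => hHG hy
  have hBA : B ⊆ A := fun y hy => hHsub hy.1
  have hsplit : (A \ B).ncard + B.ncard = A.ncard :=
    Set.ncard_diff_add_ncard_of_subset hBA (Set.toFinite A)
  have hsub : A \ B ⊆ (A \ H.neighborSet x) ∪ ((V' : Set (Fin n))ᶜ) := by
    intro y hy
    rcases hy with ⟨hyA, hyB⟩
    by_cases hyH : y ∈ H.neighborSet x
    · right
      intro hyV
      exact hyB ⟨hyH, hyV⟩
    · left; exact ⟨hyA, hyH⟩
  have hdiff : (A \ B).ncard ≤ (A \ H.neighborSet x).ncard + ((V' : Set (Fin n))ᶜ).ncard :=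
    le_trans (Set.ncard_le_ncard hsub (Set.toFinite _)) (Set.ncard_union_le _ _)
  have hcompl : ((V' : Set (Fin n))ᶜ).ncard + (V' : Set (Fin n)).ncard = n := by
    have := Set.ncard_add_ncard_compl (V' : Set (Fin n))
    simp only [Nat.card_eq_fintype_card, Fintype.card_fin] at this
    omega
  have hVcard : (V' : Set (Fin n)).ncard = V'.card := by simp
  have hloss : ((A \ H.neighborSet x).ncard : ℝ) ≤ η * n / 4 := hdeg x hxV'
  have hcomplR : (((V' : Set (Fin n))ᶜ).ncard : ℝ) = (n : ℝ) - V'.card := by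
    rw [hVcard] at hcompl
    have : ((V' : Set (Fin n))ᶜ).ncard = n - V'.card := by omega
    rw [this]
    push_cast [Nat.cast_sub hVn]
    ring
  have hsplitR : ((A \ B).ncard : ℝ) + (B.ncard : ℝ) = (A.ncard : ℝ) := by
    exact_mod_cast congrArg (Nat.cast : ℕ → ℝ) hsplit
  have hdiffR : ((A \ B).ncard : ℝ) ≤ ((A \ H.neighborSet x).ncard : ℝ) +
      (((V' : Set (Fin n))ᶜ).ncard : ℝ) := by exact_mod_cast hdiff
  linarith
end

section
/- In every folded path F every edge lies in a triangle: if F = v₁…vₙ is a folded path with ordering k₃,…,kₙ and xy ∈ E(F), then x and y have a common neighbour in F. -/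
/-- The folded path `F = v₁…vₙ` with ordering `k₃,…,kₙ`, on vertex set `ℕ`
(vertices `1,…,n`; other naturals are isolated).  Its edges are `v₁v₂` together
with `vᵢv_{kᵢ}` and `vᵢv_{i−1}` for `3 ≤ i ≤ n`. -/
def foldedPath (n : ℕ) (k : ℕ → ℕ) : SimpleGraph ℕ :=
  SimpleGraph.fromRel (fun a b =>
    (a = 1 ∧ b = 2) ∨ (3 ≤ b ∧ b ≤ n ∧ (a = k b ∨ a = b - 1)))

lemma kbound (n : ℕ) (k : ℕ → ℕ) (hk3 : k 3 = 1)
    (hk : ∀ i, 4 ≤ i → i ≤ n → k i = i - 2 ∨ k i = k (i - 1)) :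
    ∀ i, 3 ≤ i → i ≤ n → 1 ≤ k i ∧ k i ≤ i - 2 := by
  intro i
  induction i using Nat.strong_induction_on with
  | _ i ih =>
    intro h3 hin
    rcases eq_or_lt_of_le h3 with h | h
    · simp [← h, hk3]
    · rcases hk i h hin with he | he
      · omega
      · have := ih (i - 1) (by omega) (by omega) (by omega)
        rw [he]; omega

/-- in a folded path every edge lies in a triangle. -/
theorem stmt10 (n : ℕ) (hn : 3 ≤ n) (k : ℕ → ℕ) (hk3 : k 3 = 1)
    (hk : ∀ i, 4 ≤ i → i ≤ n → k i = i - 2 ∨ k i = k (i - 1)) :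
    ∀ x y, (foldedPath n k).Adj x y →
      ∃ z, (foldedPath n k).Adj x z ∧ (foldedPath n k).Adj y z := by
  have kb := kbound n k hk3 hk
  have adj : ∀ a b, (foldedPath n k).Adj a b ↔ a ≠ b ∧
      (((a = 1 ∧ b = 2) ∨ (3 ≤ b ∧ b ≤ n ∧ (a = k b ∨ a = b - 1))) ∨
       ((b = 1 ∧ a = 2) ∨ (3 ≤ a ∧ a ≤ n ∧ (b = k a ∨ b = a - 1)))) := by
    intro a b; exact SimpleGraph.fromRel_adj _ a b
  have A12 : (foldedPath n k).Adj 1 2 := by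
    rw [adj]; exact ⟨by norm_num, Or.inl (Or.inl ⟨rfl, rfl⟩)⟩
  have AK : ∀ i, 3 ≤ i → i ≤ n → (foldedPath n k).Adj (k i) i := by
    intro i h3 hin
    rw [adj]
    refine ⟨?_, Or.inl (Or.inr ⟨h3, hin, Or.inl rfl⟩)⟩
    have := kb i h3 hin; omega
  have AP : ∀ i, 3 ≤ i → i ≤ n → (foldedPath n k).Adj (i - 1) i := by
    intro i h3 hin
    rw [adj]
    exact ⟨by omega, Or.inl (Or.inr ⟨h3, hin, Or.inr rfl⟩)⟩
  have core : ∀ x y,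
      ((x = 1 ∧ y = 2) ∨ (3 ≤ y ∧ y ≤ n ∧ (x = k y ∨ x = y - 1))) →
      ∃ z, (foldedPath n k).Adj x z ∧ (foldedPath n k).Adj y z := by
    rintro x y (⟨rfl, rfl⟩ | ⟨h3, hyn, hx | hx⟩)
    · refine ⟨3, ?_, ?_⟩
      · have := AK 3 (le_refl 3) hn; rwa [hk3] at this
      · have := AP 3 (le_refl 3) hn; norm_num at this; exact this
    · -- x = k y
      rcases eq_or_lt_of_le h3 with h | h
      · -- y = 3, x = 1
        subst hx
        refine ⟨2, ?_, ?_⟩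
        · rw [← h, hk3]; exact A12
        · rw [← h]
          have := AP 3 (le_refl 3) hn; norm_num at this; exact this.symm
      · -- y ≥ 4
        refine ⟨y - 1, ?_, (AP y h3 hyn).symm⟩
        rcases hk y h hyn with he | he
        · have h1 : x = (y - 1) - 1 := by omega
          rw [h1]; exact AP (y - 1) (by omega) (by omega)
        · have h1 : x = k (y - 1) := by rw [hx, he]
          rw [h1]; exact AK (y - 1) (by omega) (by omega)
    · -- x = y - 1
      rcases eq_or_lt_of_le h3 with h | h
      · -- y = 3, x = 2
        refine ⟨1, ?_, ?_⟩
        · have hx2 : x = 2 := by omega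
          rw [hx2]; exact A12.symm
        · rw [← h, ← hk3]; exact (AK 3 (le_refl 3) hn).symm
      · -- y ≥ 4
        rcases hk y h hyn with he | he
        · refine ⟨y - 2, ?_, ?_⟩
          · have h1 : y - 2 = x - 1 := by omega
            rw [h1, hx]; exact (AP (y - 1) (by omega) (by omega)).symm
          · rw [← he]; exact (AK y h3 hyn).symm
        · refine ⟨k (y - 1), ?_, ?_⟩
          · rw [hx]; exact (AK (y - 1) (by omega) (by omega)).symm
          · rw [← he]; exact (AK y h3 hyn).symm
  intro x y hxy
  rw [adj] at hxy
  rcases hxy with ⟨_, h | h⟩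
  · exact core x y h
  · obtain ⟨z, h1, h2⟩ := core y x h
    exact ⟨z, h2, h1⟩
end

section
/- Let n ≥ 3 and let F = v₁…vₙ be a folded path. Then there exists p ∈ ℕ with n ≤ p ≤ 2n+1 and a map g : [p] → [n] such that: (i) if P := x₁…x_p is the square path on p vertices then v_{g(i)}v_{g(j)} ∈ E(F) whenever xᵢxⱼ ∈ E(P); and (ii) g(1)=1, g(2)=2, g(3)=3, and g({p−1,p}) = {n−1,n}. -/
/-- The square path `x₁…x_p` on vertex set `ℕ` (vertices `1,…,p`), with edges
`xᵢx_{i+1}` and `xᵢx_{i+2}`. -/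
def squarePath (p : ℕ) : SimpleGraph ℕ :=
  SimpleGraph.fromRel (fun a b => 1 ≤ a ∧ b ≤ p ∧ (b = a + 1 ∨ b = a + 2))

lemma sq_adj_iff {p i j : ℕ} :
    (squarePath p).Adj i j ↔ i ≠ j ∧
      ((1 ≤ i ∧ j ≤ p ∧ (j = i + 1 ∨ j = i + 2)) ∨
       (1 ≤ j ∧ i ≤ p ∧ (i = j + 1 ∨ i = j + 2))) := by
  simp [squarePath, SimpleGraph.fromRel_adj]

lemma fp_adj_iff {n : ℕ} {k : ℕ → ℕ} {a b : ℕ} :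
    (foldedPath n k).Adj a b ↔ a ≠ b ∧
      (((a = 1 ∧ b = 2) ∨ (3 ≤ b ∧ b ≤ n ∧ (a = k b ∨ a = b - 1))) ∨
       ((b = 1 ∧ a = 2) ∨ (3 ≤ a ∧ a ≤ n ∧ (b = k a ∨ b = a - 1)))) := by
  simp [foldedPath, SimpleGraph.fromRel_adj]

lemma append_one (n : ℕ) (k : ℕ → ℕ) (p : ℕ) (hp : 3 ≤ p) (g : ℕ → ℕ)
    (hg : ∀ i j, (squarePath p).Adj i j → (foldedPath n k).Adj (g i) (g j))
    (v : ℕ) (h1 : (foldedPath n k).Adj (g p) v)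
    (h2 : (foldedPath n k).Adj (g (p - 1)) v) :
    ∃ g' : ℕ → ℕ, (∀ i, i ≤ p → g' i = g i) ∧ g' (p + 1) = v ∧
      ∀ i j, (squarePath (p + 1)).Adj i j → (foldedPath n k).Adj (g' i) (g' j) := by
  set g' : ℕ → ℕ := fun i => if i = p + 1 then v else g i with hg'
  have hag : ∀ i, i ≤ p → g' i = g i := by
    intro i hi
    simp only [hg', if_neg (by omega : i ≠ p + 1)]
  refine ⟨g', hag, by simp [hg'], ?_⟩
  have key : ∀ i j, i ≠ j → 1 ≤ i → j ≤ p + 1 → (j = i + 1 ∨ j = i + 2) →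
      (foldedPath n k).Adj (g' i) (g' j) := by
    intro i j hne hi hj hd
    by_cases hjp : j = p + 1
    · subst hjp
      rw [hag i (by omega), hg']
      simp only [if_pos rfl]
      rcases hd with h | h
      · have : i = p := by omega
        subst this; exact h1
      · have : i = p - 1 := by omega
        subst this; exact h2
    · rw [hag i (by omega), hag j (by omega)]
      exact hg i j (sq_adj_iff.mpr ⟨hne, Or.inl ⟨hi, by omega, hd⟩⟩)
  intro i j hij
  rw [sq_adj_iff] at hij
  obtain ⟨hne, h | h⟩ := hij
  · exact key i j hne h.1 h.2.1 h.2.2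
  · exact (key j i hne.symm h.1 h.2.1 h.2.2).symm

lemma main_lemma (n : ℕ) (hn : 3 ≤ n) (k : ℕ → ℕ) (hk3 : k 3 = 1)
    (hk : ∀ i, 4 ≤ i → i ≤ n → k i = i - 2 ∨ k i = k (i - 1))
    (hkb : ∀ m, 3 ≤ m → m ≤ n → 1 ≤ k m ∧ k m ≤ m - 2) :
    ∀ m, 3 ≤ m → m ≤ n → ∀ c, c = m - 1 ∨ c = k m →
    ∃ p : ℕ, ∃ g : ℕ → ℕ, m ≤ p ∧ p ≤ 2 * m - 2 ∧
      (∀ i j, (squarePath p).Adj i j → (foldedPath n k).Adj (g i) (g j)) ∧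
      g 1 = 1 ∧ g 2 = 2 ∧ g 3 = 3 ∧
      ((g (p - 1) = c ∧ g p = m) ∨ (g (p - 1) = m ∧ g p = c)) := by
  have e12 : (foldedPath n k).Adj 1 2 :=
    fp_adj_iff.mpr ⟨by omega, Or.inl (Or.inl ⟨rfl, rfl⟩)⟩
  have e23 : (foldedPath n k).Adj 2 3 :=
    fp_adj_iff.mpr ⟨by omega, Or.inl (Or.inr ⟨le_refl 3, hn, Or.inr rfl⟩)⟩
  have e13 : (foldedPath n k).Adj 1 3 :=
    fp_adj_iff.mpr ⟨by omega, Or.inl (Or.inr ⟨le_refl 3, hn, Or.inl hk3.symm⟩)⟩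
  have hom3 : ∀ i j, (squarePath 3).Adj i j → (foldedPath n k).Adj (id i) (id j) := by
    intro i j hij
    rw [sq_adj_iff] at hij
    obtain ⟨hne, h⟩ := hij
    have hc : (i = 1 ∧ j = 2) ∨ (i = 2 ∧ j = 3) ∨ (i = 1 ∧ j = 3) ∨
        (j = 1 ∧ i = 2) ∨ (j = 2 ∧ i = 3) ∨ (j = 1 ∧ i = 3) := by omega
    simp only [id]
    rcases hc with ⟨h1, h2⟩ | ⟨h1, h2⟩ | ⟨h1, h2⟩ | ⟨h1, h2⟩ | ⟨h1, h2⟩ | ⟨h1, h2⟩ <;>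
      subst h1 <;> subst h2
    · exact e12
    · exact e23
    · exact e13
    · exact e12.symm
    · exact e23.symm
    · exact e13.symm
  intro m hm
  induction m, hm using Nat.le_induction with
  | base =>
    intro _ c hc
    rcases hc with hc | hc
    · -- c = 2, walk 1,2,3
      exact ⟨3, id, le_refl 3, by omega, hom3, rfl, rfl, rfl, Or.inl ⟨hc.symm, rfl⟩⟩
    · -- c = k 3 = 1, walk 1,2,3,1
      rw [hk3] at hc
      obtain ⟨g', hag, hval, hom'⟩ := append_one n k 3 (le_refl 3) id hom3 1 e13.symm e12.symm
      refine ⟨4, g', by omega, by omega, hom', ?_, ?_, ?_, Or.inr ⟨?_, ?_⟩⟩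
      · rw [hag 1 (by omega)]; rfl
      · rw [hag 2 (by omega)]; rfl
      · rw [hag 3 (by omega)]; rfl
      · show g' 3 = 3; rw [hag 3 (by omega)]; rfl
      · show g' 4 = c; rw [hc]; exact hval
  | succ m hm ih =>
    intro hmn c' hc'
    have hmn' : m ≤ n := by omega
    have hkm1 := hk (m + 1) (by omega) hmn
    simp only [show m + 1 - 2 = m - 1 from by omega,
      show m + 1 - 1 = m from by omega] at hkm1
    have hb1 := hkb (m + 1) (by omega) hmn
    have hbm := hkb m (by omega) hmn'
    simp only [show m + 1 - 2 = m - 1 from by omega] at hb1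
    -- adjacency facts
    have eA : (foldedPath n k).Adj m (m + 1) :=
      fp_adj_iff.mpr ⟨by omega, Or.inl (Or.inr ⟨by omega, hmn, Or.inr (by omega)⟩)⟩
    have eB : (foldedPath n k).Adj (k (m + 1)) (m + 1) :=
      fp_adj_iff.mpr ⟨by omega, Or.inl (Or.inr ⟨by omega, hmn, Or.inl rfl⟩)⟩
    have eC : (foldedPath n k).Adj (k (m + 1)) m := by
      rcases hkm1 with h | h
      · exact fp_adj_iff.mpr ⟨by omega, Or.inl (Or.inr ⟨by omega, hmn', Or.inr h⟩)⟩
      · exact fp_adj_iff.mpr ⟨by omega, Or.inl (Or.inr ⟨by omega, hmn', Or.inl h⟩)⟩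
    obtain ⟨p, g, hp1, hp2, hom, hg1, hg2, hg3, hend⟩ :=
      ih hmn' (k (m + 1)) hkm1
    simp only [show m + 1 - 1 = m from by omega] at hc'
    have hp3 : 3 ≤ p := by omega
    rcases hend with ⟨ha, hb⟩ | ⟨ha, hb⟩
    · -- ends (k(m+1), m)
      obtain ⟨g₁, hag₁, hval₁, hom₁⟩ := append_one n k p hp3 g hom (m + 1)
        (by rw [hb]; exact eA) (by rw [ha]; exact eB)
      rcases hc' with hc' | hc'
      · -- target c' = m : done with p+1
        refine ⟨p + 1, g₁, by omega, by omega, hom₁, ?_, ?_, ?_, Or.inl ⟨?_, hval₁⟩⟩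
        · rw [hag₁ 1 (by omega)]; exact hg1
        · rw [hag₁ 2 (by omega)]; exact hg2
        · rw [hag₁ 3 (by omega)]; exact hg3
        · show g₁ p = c'; rw [hag₁ p le_rfl, hb, hc']
      · -- target c' = k (m+1) : append again
        obtain ⟨g₂, hag₂, hval₂, hom₂⟩ := append_one n k (p + 1) (by omega) g₁ hom₁
          (k (m + 1)) (by rw [hval₁]; exact eB.symm)
          (by rw [show p + 1 - 1 = p from by omega, hag₁ p le_rfl, hb]; exact eC.symm)
        refine ⟨p + 2, g₂, by omega, by omega, hom₂, ?_, ?_, ?_, Or.inr ⟨?_, ?_⟩⟩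
        · rw [hag₂ 1 (by omega), hag₁ 1 (by omega)]; exact hg1
        · rw [hag₂ 2 (by omega), hag₁ 2 (by omega)]; exact hg2
        · rw [hag₂ 3 (by omega), hag₁ 3 (by omega)]; exact hg3
        · show g₂ (p + 1) = m + 1; rw [hag₂ (p + 1) le_rfl]; exact hval₁
        · show g₂ (p + 2) = c'; rw [hc']; exact hval₂
    · -- ends (m, k(m+1))
      obtain ⟨g₁, hag₁, hval₁, hom₁⟩ := append_one n k p hp3 g hom (m + 1)
        (by rw [hb]; exact eB) (by rw [ha]; exact eA)
      rcases hc' with hc' | hc'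
      · -- target c' = m : append m
        obtain ⟨g₂, hag₂, hval₂, hom₂⟩ := append_one n k (p + 1) (by omega) g₁ hom₁ m
          (by rw [hval₁]; exact eA.symm)
          (by rw [show p + 1 - 1 = p from by omega, hag₁ p le_rfl, hb]; exact eC)
        refine ⟨p + 2, g₂, by omega, by omega, hom₂, ?_, ?_, ?_, Or.inr ⟨?_, ?_⟩⟩
        · rw [hag₂ 1 (by omega), hag₁ 1 (by omega)]; exact hg1
        · rw [hag₂ 2 (by omega), hag₁ 2 (by omega)]; exact hg2
        · rw [hag₂ 3 (by omega), hag₁ 3 (by omega)]; exact hg3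
        · show g₂ (p + 1) = m + 1; rw [hag₂ (p + 1) le_rfl]; exact hval₁
        · show g₂ (p + 2) = c'; rw [hc']; exact hval₂
      · -- target c' = k (m+1) : done with p+1
        refine ⟨p + 1, g₁, by omega, by omega, hom₁, ?_, ?_, ?_, Or.inl ⟨?_, hval₁⟩⟩
        · rw [hag₁ 1 (by omega)]; exact hg1
        · rw [hag₁ 2 (by omega)]; exact hg2
        · rw [hag₁ 3 (by omega)]; exact hg3
        · show g₁ p = c'; rw [hag₁ p le_rfl, hb, hc']

/-- there is a homomorphism from a square path on `p` vertices
(`n ≤ p ≤ 2n+1`) onto a folded path on `n` vertices with the stated boundary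
behaviour. -/
theorem stmt11 (n : ℕ) (hn : 3 ≤ n) (k : ℕ → ℕ) (hk3 : k 3 = 1)
    (hk : ∀ i, 4 ≤ i → i ≤ n → k i = i - 2 ∨ k i = k (i - 1)) :
    ∃ p : ℕ, n ≤ p ∧ p ≤ 2 * n + 1 ∧ ∃ g : ℕ → ℕ,
      (∀ i j, (squarePath p).Adj i j → (foldedPath n k).Adj (g i) (g j)) ∧
      g 1 = 1 ∧ g 2 = 2 ∧ g 3 = 3 ∧
      ({g (p - 1), g p} : Set ℕ) = {n - 1, n} := by
  have hkb : ∀ m, 3 ≤ m → m ≤ n → 1 ≤ k m ∧ k m ≤ m - 2 := by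
    intro m hm
    induction m, hm using Nat.le_induction with
    | base => intro _; omega
    | succ m hm ih =>
      intro h
      have h1 := hk (m + 1) (by omega) h
      simp only [Nat.add_sub_cancel] at h1
      have h2 := ih (by omega)
      omega
  obtain ⟨p, g, hp1, hp2, hom, hg1, hg2, hg3, hend⟩ :=
    main_lemma n hn k hk3 hk hkb n hn le_rfl (n - 1) (Or.inl rfl)
  refine ⟨p, hp1, by omega, g, hom, hg1, hg2, hg3, ?_⟩
  rcases hend with ⟨ha, hb⟩ | ⟨ha, hb⟩
  · rw [ha, hb]
  · rw [ha, hb]; exact Set.pair_comm n (n - 1)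
end

section
/- Let ℓ, c ∈ ℕ with c ≥ 3 and ℓ ≡ 1 (mod 3c). Then there is a graph homomorphism φ from the ℓ-triangle cycle Z_ℓ to the square cycle C²_{3c} such that every vertex of C²_{3c} has at most ⌈ℓ/c⌉ preimages and at least ⌊ℓ/c⌋ preimages. -/
/-- The `ℓ`-triangle cycle `Z_ℓ`. -/
def triangleCycle (ℓ : ℕ) : SimpleGraph (ZMod ℓ × Fin 3) :=
  SimpleGraph.fromRel (fun a b => a.2 ≠ b.2 ∧ (b.1 = a.1 ∨ b.1 = a.1 + 1))

/-- The square cycle `C²_m` on vertex set `ZMod m`. -/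
def squareCycle (m : ℕ) : SimpleGraph (ZMod m) :=
  SimpleGraph.fromRel (fun a b => b = a + 1 ∨ b = a + 2)

/-- Auxiliary: the vertex of the triangle `{k, k+1, k+2}` congruent to `j` mod 3. -/
def stmt17g (k j : ℕ) : ℕ := k + (j + 3 - k % 3) % 3

lemma stmt17_two_mod (m N : ℕ) (h : m < 2*N) :
    (m % N = m ∧ m < N) ∨ (m % N + N = m ∧ m % N < N) := by
  rcases Nat.lt_or_ge m N with h1 | h1
  · exact Or.inl ⟨Nat.mod_eq_of_lt h1, h1⟩
  · right
    rw [Nat.mod_eq_sub_mod h1, Nat.mod_eq_of_lt (by omega)]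
    omega

lemma stmt17g_mod3 (k j : ℕ) (hj : j < 3) : stmt17g k j % 3 = j := by unfold stmt17g; omega

lemma stmt17g_lb (k j : ℕ) : k ≤ stmt17g k j ∧ stmt17g k j < k + 3 := by unfold stmt17g; omega

lemma stmt17_nle (N m d : ℕ) (h : (m + d) % N = m % N) (h0 : 0 < d) : N ≤ d := by
  have h1 : m ≡ m + d [MOD N] := h.symm
  have h2 : N ∣ d := by
    have := (Nat.modEq_iff_dvd' (Nat.le_add_right m d)).mp h1
    simpa using this
  exact Nat.le_of_dvd h0 h2

lemma stmt17_step (N fa fb d : ℕ) (hd1 : 1 ≤ d) (hdN : d < N)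
    (h : fb = fa + d ∨ fb + N = fa + d ∨ fb = fa + d + N) :
    fb % N = (fa + d) % N ∧ fa % N ≠ fb % N := by
  have hm : fb % N = (fa + d) % N := by
    rcases h with h | h | h
    · rw [h]
    · rw [← h, Nat.add_mod_right]
    · rw [h, Nat.add_mod_right]
  refine ⟨hm, fun he => ?_⟩
  rw [← he] at hm
  exact absurd (stmt17_nle N fa d hm.symm (by omega)) (by omega)

set_option maxHeartbeats 1000000 in
lemma stmt17_core (N k k' j j' : ℕ) (h9 : 9 ≤ N) (h3 : N % 3 = 0)
    (hk : k < N) (hk' : k' < N)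
    (hkk : k' = k ∨ k' = (k+1) % N) (hj : j < 3) (hj' : j' < 3) (hne : j ≠ j') :
    stmt17g k j % N ≠ stmt17g k' j' % N ∧
    (stmt17g k' j' % N = (stmt17g k j + 1) % N ∨ stmt17g k' j' % N = (stmt17g k j + 2) % N ∨
     stmt17g k j % N = (stmt17g k' j' + 1) % N ∨ stmt17g k j % N = (stmt17g k' j' + 2) % N) := by
  have hkk2 : k' = k ∨ (k' = k + 1 ∧ k + 1 < N) ∨ (k' = 0 ∧ k + 1 = N) := by
    have h7 := stmt17_two_mod (k + 1) N (by omega)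
    omega
  clear hkk
  have hfa3 := stmt17g_mod3 k j hj
  have hfb3 := stmt17g_mod3 k' j' hj'
  have hfa := stmt17g_lb k j
  have hfb := stmt17g_lb k' j'
  generalize stmt17g k j = fa at *
  generalize stmt17g k' j' = fb at *
  have hdiff : (fb = fa + 1 ∨ fb + N = fa + 1) ∨ (fb = fa + 2 ∨ fb + N = fa + 2) ∨
      (fa = fb + 1 ∨ fa + N = fb + 1) ∨ (fa = fb + 2 ∨ fa + N = fb + 2) ∨
      (fa = fb + N + 1) ∨ (fa = fb + N + 2) ∨ (fb = fa + N + 1) ∨ (fb = fa + N + 2) := by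
    omega
  rcases hdiff with h | h | h | h | h | h | h | h
  · have := stmt17_step N fa fb 1 (by omega) (by omega) (by tauto); tauto
  · have := stmt17_step N fa fb 2 (by omega) (by omega) (by tauto); tauto
  · have := stmt17_step N fb fa 1 (by omega) (by omega) (by tauto); tauto
  · have := stmt17_step N fb fa 2 (by omega) (by omega) (by tauto); tauto
  · have := stmt17_step N fb fa 1 (by omega) (by omega) (Or.inr (Or.inr (by omega))); tauto
  · have := stmt17_step N fb fa 2 (by omega) (by omega) (Or.inr (Or.inr (by omega))); tauto
  · have := stmt17_step N fa fb 1 (by omega) (by omega) (Or.inr (Or.inr (by omega))); tauto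
  · have := stmt17_step N fa fb 2 (by omega) (by omega) (Or.inr (Or.inr (by omega))); tauto

lemma stmt17_count_mod (N t k : ℕ) (hN : 0 < N) (hk : k < N) :
    ((Finset.range (N*t+1)).filter (fun n => n % N = k)).card
      = t + if k = 0 then 1 else 0 := by
  have hinj : Function.Injective (fun q : ℕ => q*N+k) := by
    intro a b h
    simp only [] at h
    exact Nat.eq_of_mul_eq_mul_right hN (by omega)
  have himg : (Finset.range (N*t+1)).filter (fun n => n % N = k)
      = (Finset.range (t + if k = 0 then 1 else 0)).image (fun q => q*N+k) := by
    ext n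
    simp only [Finset.mem_filter, Finset.mem_range, Finset.mem_image]
    constructor
    · rintro ⟨hn, hmod⟩
      refine ⟨n / N, ?_, ?_⟩
      · have hdm := Nat.div_add_mod n N
        have hcomm : N * (n/N) = (n/N) * N := Nat.mul_comm _ _
        by_contra hq
        push_neg at hq
        have h3 : N * (t + (if k = 0 then 1 else 0)) ≤ N * (n/N) := Nat.mul_le_mul_left _ hq
        rw [Nat.mul_add] at h3
        have hcomm2 : N * t = t * N := Nat.mul_comm _ _
        split_ifs at h3 <;> omega
      · have hdm := Nat.div_add_mod n N
        have hcomm : N * (n/N) = (n/N) * N := Nat.mul_comm _ _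
        omega
    · rintro ⟨q, hq, rfl⟩
      constructor
      · split_ifs at hq with h0
        · subst h0
          have h5 : q * N ≤ t * N := Nat.mul_le_mul_right _ (by omega)
          have hcomm2 : N * t = t * N := Nat.mul_comm _ _
          omega
        · have h5 : (q+1) * N ≤ t * N := Nat.mul_le_mul_right _ (by omega)
          have hcomm2 : N * t = t * N := Nat.mul_comm _ _
          have h6 : (q+1)*N = q*N + N := Nat.succ_mul _ _
          omega
      · rw [Nat.add_comm, Nat.add_mul_mod_self_right, Nat.mod_eq_of_lt hk]
  rw [himg, Finset.card_image_of_injective _ hinj, Finset.card_range]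

/-- characterization of the triangle-starts containing a given vertex `xv`. -/
lemma stmt17_charK (N xv k : ℕ) (h9 : 9 ≤ N) (h3 : N % 3 = 0)
    (hx : xv < N) (hk : k < N) :
    stmt17g k (xv % 3) % N = xv ↔
      (k = xv ∨ k = (xv + N - 1) % N ∨ k = (xv + N - 2) % N) := by
  have hfa3 := stmt17g_mod3 k (xv % 3) (by omega)
  have hfa := stmt17g_lb k (xv % 3)
  have h1 := stmt17_two_mod (stmt17g k (xv % 3)) N (by omega)
  have h2 := stmt17_two_mod (xv + N - 1) N (by omega)
  have h4 := stmt17_two_mod (xv + N - 2) N (by omega)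
  generalize stmt17g k (xv % 3) = fa at *
  omega

/-- for `c ≥ 3` and `ℓ ≡ 1 (mod 3c)` there is a graph
homomorphism from `Z_ℓ` to `C²_{3c}` under which every vertex of `C²_{3c}` has
at least `⌊ℓ/c⌋` and at most `⌈ℓ/c⌉` preimages. -/
theorem stmt17 (c ℓ : ℕ) (hc : 3 ≤ c) (hℓ : ℓ % (3 * c) = 1) :
    ∃ φ : ZMod ℓ × Fin 3 → ZMod (3 * c),
      (∀ a b, (triangleCycle ℓ).Adj a b →
        (squareCycle (3 * c)).Adj (φ a) (φ b)) ∧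
      ∀ x : ZMod (3 * c),
        ℓ / c ≤ (φ ⁻¹' {x}).ncard ∧ (φ ⁻¹' {x}).ncard ≤ (ℓ + c - 1) / c := by
  have h9 : 9 ≤ 3 * c := by omega
  have h3 : (3 * c) % 3 = 0 := by omega
  have hl1 : 1 ≤ ℓ := by
    rcases Nat.eq_zero_or_pos ℓ with rfl | h
    · rw [Nat.zero_mod] at hℓ; omega
    · omega
  haveI : NeZero ℓ := ⟨by omega⟩
  haveI : NeZero (3 * c) := ⟨by omega⟩
  obtain ⟨t, hℓt⟩ : ∃ t, ℓ = (3 * c) * t + 1 := by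
    refine ⟨ℓ / (3 * c), ?_⟩
    have h := Nat.div_add_mod ℓ (3 * c)
    omega
  refine ⟨fun p => ((stmt17g (p.1.val % (3 * c)) p.2.val : ℕ) : ZMod (3 * c)), ?_, ?_⟩
  · -- homomorphism property
    have key : ∀ (u v : ZMod ℓ) (j j' : Fin 3), j ≠ j' → (v = u ∨ v = u + 1) →
        ((stmt17g (u.val % (3*c)) j.val : ℕ) : ZMod (3*c)) ≠
          ((stmt17g (v.val % (3*c)) j'.val : ℕ) : ZMod (3*c)) ∧
        (((stmt17g (v.val % (3*c)) j'.val : ℕ) : ZMod (3*c)) =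
            ((stmt17g (u.val % (3*c)) j.val : ℕ) : ZMod (3*c)) + 1 ∨
         ((stmt17g (v.val % (3*c)) j'.val : ℕ) : ZMod (3*c)) =
            ((stmt17g (u.val % (3*c)) j.val : ℕ) : ZMod (3*c)) + 2 ∨
         ((stmt17g (u.val % (3*c)) j.val : ℕ) : ZMod (3*c)) =
            ((stmt17g (v.val % (3*c)) j'.val : ℕ) : ZMod (3*c)) + 1 ∨
         ((stmt17g (u.val % (3*c)) j.val : ℕ) : ZMod (3*c)) =
            ((stmt17g (v.val % (3*c)) j'.val : ℕ) : ZMod (3*c)) + 2) := by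
      intro u v j j' hjj hvu
      have hkk : v.val % (3*c) = u.val % (3*c) ∨
          v.val % (3*c) = (u.val % (3*c) + 1) % (3*c) := by
        rcases hvu with rfl | rfl
        · left; rfl
        · have hu := ZMod.natCast_rightInverse (n := ℓ) u
          have h1 : ((u.val + 1 : ℕ) : ZMod ℓ) = u + 1 := by
            rw [Nat.cast_add, Nat.cast_one, hu]
          have h2 : (u + 1 : ZMod ℓ).val = (u.val + 1) % ℓ := by
            rw [← h1, ZMod.val_natCast]
          have hlt : u.val < ℓ := ZMod.val_lt u
          rcases Nat.lt_or_ge (u.val + 1) ℓ with h | h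
          · right
            rw [h2, Nat.mod_eq_of_lt h, Nat.mod_add_mod]
          · left
            have huv : u.val = (3*c) * t := by omega
            have h0 : ((3*c) * t) % (3*c) = 0 := Nat.mul_mod_right _ _
            rw [h2, huv]
            have : ((3*c) * t + 1) % ℓ = 0 := by
              rw [← hℓt, Nat.mod_self]
            rw [this, Nat.zero_mod, h0]
      have hco := stmt17_core (3*c) (u.val % (3*c)) (v.val % (3*c)) j.val j'.val h9 h3
        (Nat.mod_lt _ (by omega)) (Nat.mod_lt _ (by omega)) hkk j.isLt j'.isLt
        (fun h => hjj (Fin.ext h))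
      obtain ⟨hne', hor⟩ := hco
      constructor
      · intro h
        apply hne'
        have := congrArg ZMod.val h
        rwa [ZMod.val_natCast, ZMod.val_natCast] at this
      · rcases hor with h | h | h | h
        · left
          have := (ZMod.natCast_eq_natCast_iff' _ _ _).mpr h
          push_cast at this
          exact this
        · right; left
          have := (ZMod.natCast_eq_natCast_iff' _ _ _).mpr h
          push_cast at this
          exact this
        · right; right; left
          have := (ZMod.natCast_eq_natCast_iff' _ _ _).mpr h
          push_cast at this
          exact this
        · right; right; right
          have := (ZMod.natCast_eq_natCast_iff' _ _ _).mpr h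
          push_cast at this
          exact this
    intro a b hab
    rw [triangleCycle, SimpleGraph.fromRel_adj] at hab
    rw [squareCycle, SimpleGraph.fromRel_adj]
    obtain ⟨hne, hr | hr⟩ := hab
    · obtain ⟨hj, hv⟩ := hr
      have := key a.1 b.1 a.2 b.2 hj hv
      tauto
    · obtain ⟨hj, hv⟩ := hr
      have := key b.1 a.1 b.2 a.2 hj hv
      constructor
      · exact fun h => (this.1 h.symm)
      · tauto
  · -- counting
    intro x
    have hxlt : x.val < 3*c := ZMod.val_lt x
    set jx : Fin 3 := ⟨x.val % 3, by omega⟩ with hjx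
    have hpre : (fun p : ZMod ℓ × Fin 3 =>
          ((stmt17g (p.1.val % (3*c)) p.2.val : ℕ) : ZMod (3*c))) ⁻¹' {x}
        = (fun i : ZMod ℓ => (i, jx)) ''
            {i : ZMod ℓ | stmt17g (i.val % (3*c)) (x.val % 3) % (3*c) = x.val} := by
      ext ⟨i, j⟩
      simp only [Set.mem_preimage, Set.mem_singleton_iff, Set.mem_image, Set.mem_setOf_eq,
        Prod.mk.injEq]
      constructor
      · intro h
        have hval : stmt17g (i.val % (3*c)) j.val % (3*c) = x.val := by
          rw [← h, ZMod.val_natCast]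
        have hj : j.val = x.val % 3 := by
          have h31 : stmt17g (i.val % (3*c)) j.val % 3 = j.val := stmt17g_mod3 _ _ j.isLt
          have h32 : stmt17g (i.val % (3*c)) j.val % (3*c) % 3
              = stmt17g (i.val % (3*c)) j.val % 3 := Nat.mod_mod_of_dvd _ ⟨c, rfl⟩
          rw [hval] at h32
          omega
        refine ⟨i, ?_, rfl, ?_⟩
        · rw [← hj]; exact hval
        · exact (Fin.ext hj.symm : jx = j).symm ▸ rfl
      · rintro ⟨i', hi', rfl, rfl⟩
        have h1 : ((stmt17g (i'.val % (3*c)) (jx.val) : ℕ) : ZMod (3*c))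
            = ((x.val : ℕ) : ZMod (3*c)) := by
          rw [ZMod.natCast_eq_natCast_iff']
          have : jx.val = x.val % 3 := rfl
          rw [this, hi', Nat.mod_eq_of_lt hxlt]
        rw [h1]
        exact ZMod.natCast_rightInverse x
    rw [hpre, Set.ncard_image_of_injective _
      (fun a b h => (Prod.ext_iff.mp h).1 : Function.Injective (fun i : ZMod ℓ => (i, jx)))]
    have hset : {i : ZMod ℓ | stmt17g (i.val % (3*c)) (x.val % 3) % (3*c) = x.val}
        = ↑(Finset.univ.filter
            (fun i : ZMod ℓ => stmt17g (i.val % (3*c)) (x.val % 3) % (3*c) = x.val)) := by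
      ext i; simp
    rw [hset, Set.ncard_coe_finset]
    have hcard : (Finset.univ.filter
          (fun i : ZMod ℓ => stmt17g (i.val % (3*c)) (x.val % 3) % (3*c) = x.val)).card
        = ((Finset.range ℓ).filter
            (fun n => stmt17g (n % (3*c)) (x.val % 3) % (3*c) = x.val)).card := by
      refine Finset.card_bij' (fun i _ => i.val) (fun n _ => (n : ZMod ℓ)) ?_ ?_ ?_ ?_
      · intro i hi
        simp only [Finset.mem_filter, Finset.mem_range] at hi ⊢
        exact ⟨ZMod.val_lt i, hi.2⟩
      · intro n hn
        simp only [Finset.mem_filter, Finset.mem_range, Finset.mem_univ, true_and] at hn ⊢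
        rw [ZMod.val_cast_of_lt hn.1]
        exact hn.2
      · intro i _
        exact ZMod.natCast_rightInverse i
      · intro n hn
        simp only [Finset.mem_filter, Finset.mem_range] at hn
        exact ZMod.val_cast_of_lt hn.1
    rw [hcard]
    have hfc : ((Finset.range ℓ).filter
          (fun n => stmt17g (n % (3*c)) (x.val % 3) % (3*c) = x.val))
        = ((Finset.range ℓ).filter (fun n => n % (3*c) = x.val))
          ∪ ((Finset.range ℓ).filter (fun n => n % (3*c) = (x.val + 3*c - 1) % (3*c)))
          ∪ ((Finset.range ℓ).filter (fun n => n % (3*c) = (x.val + 3*c - 2) % (3*c))) := by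
      rw [← Finset.filter_or, ← Finset.filter_or]
      apply Finset.filter_congr
      intro n _
      rw [or_assoc]
      exact stmt17_charK (3*c) x.val (n % (3*c)) h9 h3 hxlt (Nat.mod_lt _ (by omega))
    rw [hfc]
    have hK1 := stmt17_two_mod (x.val + 3*c - 1) (3*c) (by omega)
    have hK2 := stmt17_two_mod (x.val + 3*c - 2) (3*c) (by omega)
    have hd01 : x.val ≠ (x.val + 3*c - 1) % (3*c) := by omega
    have hd02 : x.val ≠ (x.val + 3*c - 2) % (3*c) := by omega
    have hd12 : (x.val + 3*c - 1) % (3*c) ≠ (x.val + 3*c - 2) % (3*c) := by omega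
    have hdisj1 : Disjoint ((Finset.range ℓ).filter (fun n => n % (3*c) = x.val))
        ((Finset.range ℓ).filter (fun n => n % (3*c) = (x.val + 3*c - 1) % (3*c))) := by
      rw [Finset.disjoint_left]
      intro n h1 h2
      simp only [Finset.mem_filter] at h1 h2
      omega
    have hdisj2 : Disjoint (((Finset.range ℓ).filter (fun n => n % (3*c) = x.val))
          ∪ ((Finset.range ℓ).filter (fun n => n % (3*c) = (x.val + 3*c - 1) % (3*c))))
        ((Finset.range ℓ).filter (fun n => n % (3*c) = (x.val + 3*c - 2) % (3*c))) := by
      rw [Finset.disjoint_left]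
      intro n h1 h2
      simp only [Finset.mem_union, Finset.mem_filter] at h1 h2
      omega
    rw [Finset.card_union_of_disjoint hdisj2, Finset.card_union_of_disjoint hdisj1]
    rw [hℓt]
    rw [stmt17_count_mod _ _ _ (by omega) hxlt,
      stmt17_count_mod _ _ _ (by omega) (by omega),
      stmt17_count_mod _ _ _ (by omega) (by omega)]
    have hdiv1 : (3 * c * t + 1) / c = 3 * t := by
      have h1 : 3 * c * t + 1 = c * (3 * t) + 1 := by ring
      rw [h1, Nat.mul_add_div (by omega), Nat.div_eq_of_lt (by omega)]
      omega
    have hdiv2 : (3 * c * t + 1 + c - 1) / c = 3 * t + 1 := by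
      have h2 : 3 * c * t + c = c * (3 * t + 1) := by ring
      have h1 : 3 * c * t + 1 + c - 1 = c * (3 * t + 1) := by omega
      rw [h1, Nat.mul_div_cancel_left _ (by omega : 0 < c)]
    rw [hdiv1, hdiv2]
    split_ifs <;> omega
end
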